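/- arXiv:1907.10391 — 3 statements merged into one kernel-verified Lean document; each statement's English description precedes it below -/
import Mathlib

section
/- Let n ≥ 3 and φ : ℝ → ℝ. Let g : ℝ → Matrix (Fin n) (Fin n) ℝ be a differentiable family with g'(t) = φ(t) • g(t), let T : ℝ → (Fin n → Fin n → Fin n → Fin n → ℝ) be a differentiable family with (d/dt) T(t) i j k l = φ(t) * T(t) i j k l, let r : Matrix (Fin n) (Fin n) ℝ be a fixed (time-independent) matrix, and let Sc : ℝ → ℝ be differentiable with Sc'(t) = -φ(t) * Sc(t). Define the Weyl tensor W(t) i j k l = T(t) i j k l - (1/(n-2)) * (g(t) j k * r i l - g(t) i k * r j l + g(t) i l * r j k - g(t) j l * r i k) + (Sc(t)/((n-1)*(n-2))) * (g(t) i l * g(t) j k - g(t) j l * g(t) i k). Then for all indices, t ↦ W(t) i j k l is differentiable with (d/dt) W(t) i j k l = φ(t) * W(t) i j k l. -/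
/-!
Call `φ` the rate of `f` when `f' = φ f`. Rates add under products and are preserved by linear
combinations with constant coefficients. Here `g` and `T` have rate `φ`, `r` rate `0` and `Sc`
rate `-φ`, so every term of `W` — `T`, `g r` and `Sc g g` — has rate `φ`, and hence so has `W`.
-/

variable {𝕜 : Type*} [NontriviallyNormedField 𝕜]

/-- Unlike `logDeriv f t = a`, this still carries information where `f` vanishes. -/
def HasLogDerivAt (f : 𝕜 → 𝕜) (a t : 𝕜) : Prop :=
  HasDerivAt f (a * f t) t

namespace HasLogDerivAt

variable {f h : 𝕜 → 𝕜} {a b t : 𝕜}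

theorem of_deriv_eq (hf : DifferentiableAt 𝕜 f t) (hf' : deriv f t = a * f t) :
    HasLogDerivAt f a t := by
  rw [HasLogDerivAt, ← hf']
  exact hf.hasDerivAt

theorem hasDerivAt (hf : HasLogDerivAt f a t) : HasDerivAt f (a * f t) t := hf

theorem add (hf : HasLogDerivAt f a t) (hh : HasLogDerivAt h a t) :
    HasLogDerivAt (fun s => f s + h s) a t :=
  (hf.hasDerivAt.add hh.hasDerivAt).congr_deriv (mul_add a _ _).symm

theorem sub (hf : HasLogDerivAt f a t) (hh : HasLogDerivAt h a t) :
    HasLogDerivAt (fun s => f s - h s) a t :=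
  (hf.hasDerivAt.sub hh.hasDerivAt).congr_deriv (mul_sub a _ _).symm

theorem const_mul (c : 𝕜) (hf : HasLogDerivAt f a t) :
    HasLogDerivAt (fun s => c * f s) a t :=
  (hf.hasDerivAt.const_mul c).congr_deriv (mul_left_comm c a _)

theorem mul_const (c : 𝕜) (hf : HasLogDerivAt f a t) :
    HasLogDerivAt (fun s => f s * c) a t :=
  (hf.hasDerivAt.mul_const c).congr_deriv (mul_assoc a _ c)

theorem div_const (c : 𝕜) (hf : HasLogDerivAt f a t) :
    HasLogDerivAt (fun s => f s / c) a t := by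
  simpa only [div_eq_mul_inv] using hf.mul_const c⁻¹

theorem mul (hf : HasLogDerivAt f a t) (hh : HasLogDerivAt h b t) :
    HasLogDerivAt (fun s => f s * h s) (a + b) t :=
  (hf.hasDerivAt.mul hh.hasDerivAt).congr_deriv (by ring)

end HasLogDerivAt

theorem yamabe_weyl_evolution_general
    (n : ℕ) (φ : ℝ → ℝ)
    (g : ℝ → Matrix (Fin n) (Fin n) ℝ)
    (T : ℝ → Fin n → Fin n → Fin n → Fin n → ℝ)
    (r : Matrix (Fin n) (Fin n) ℝ)
    (Sc : ℝ → ℝ)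
    (hg : ∀ i j, Differentiable ℝ fun t => g t i j)
    (hg' : ∀ t i j, deriv (fun s => g s i j) t = φ t * g t i j)
    (hT : ∀ i j k l, Differentiable ℝ fun t => T t i j k l)
    (hT' : ∀ t i j k l, deriv (fun s => T s i j k l) t = φ t * T t i j k l)
    (hSc : Differentiable ℝ Sc)
    (hSc' : ∀ t, deriv Sc t = -φ t * Sc t) :
    ∀ i j k l : Fin n,
      (Differentiable ℝ fun t =>
          T t i j k l - (1 / ((n : ℝ) - 2))
              * (g t j k * r i l - g t i k * r j l + g t i l * r j k - g t j l * r i k)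
            + (Sc t / (((n : ℝ) - 1) * ((n : ℝ) - 2)))
              * (g t i l * g t j k - g t j l * g t i k)) ∧
        ∀ t, deriv (fun s =>
            T s i j k l - (1 / ((n : ℝ) - 2))
                * (g s j k * r i l - g s i k * r j l + g s i l * r j k - g s j l * r i k)
              + (Sc s / (((n : ℝ) - 1) * ((n : ℝ) - 2)))
                * (g s i l * g s j k - g s j l * g s i k)) t
          = φ t * (T t i j k l - (1 / ((n : ℝ) - 2))
                * (g t j k * r i l - g t i k * r j l + g t i l * r j k - g t j l * r i k)
              + (Sc t / (((n : ℝ) - 1) * ((n : ℝ) - 2)))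
                * (g t i l * g t j k - g t j l * g t i k)) := by
  intro i j k l
  have hW : ∀ t, HasLogDerivAt (fun s =>
      T s i j k l - (1 / ((n : ℝ) - 2))
          * (g s j k * r i l - g s i k * r j l + g s i l * r j k - g s j l * r i k)
        + (Sc s / (((n : ℝ) - 1) * ((n : ℝ) - 2)))
          * (g s i l * g s j k - g s j l * g s i k)) (φ t) t := by
    intro t
    have hgt (i j : Fin n) : HasLogDerivAt (fun s => g s i j) (φ t) t :=
      .of_deriv_eq (hg i j t) (hg' t i j)
    have hTt : HasLogDerivAt (fun s => T s i j k l) (φ t) t :=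
      .of_deriv_eq (hT i j k l t) (hT' t i j k l)
    have hSct : HasLogDerivAt Sc (-φ t) t := .of_deriv_eq (hSc t) (hSc' t)
    have hRicci := (((((hgt j k).mul_const (r i l)).sub ((hgt i k).mul_const (r j l))).add
      ((hgt i l).mul_const (r j k))).sub ((hgt j l).mul_const (r i k))).const_mul
        (1 / ((n : ℝ) - 2))
    have hScalar := (hSct.div_const (((n : ℝ) - 1) * ((n : ℝ) - 2))).mul
      (((hgt i l).mul (hgt j k)).sub ((hgt j l).mul (hgt i k)))
    rw [show -φ t + (φ t + φ t) = φ t by ring] at hScalar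
    exact (hTt.sub hRicci).add hScalar
  exact ⟨fun t => (hW t).hasDerivAt.differentiableAt, fun t => (hW t).hasDerivAt.deriv⟩

/-- Component form of Theorem 3.7: the Weyl curvature tensor
`W_{ijkl} = R_{ijkl} - (1/(n-2))(g_{jk}r_{il} - g_{ik}r_{jl} + g_{il}r_{jk} - g_{jl}r_{ik})
  + (R/((n-1)(n-2)))(g_{il}g_{jk} - g_{jl}g_{ik})`
evolves under the Yamabe flow by `∂W_{ijkl}/∂t = φ W_{ijkl}`. -/
theorem yamabe_weyl_evolution
    (n : ℕ) (hn : 3 ≤ n) (φ : ℝ → ℝ)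
    (g : ℝ → Matrix (Fin n) (Fin n) ℝ)
    (T : ℝ → Fin n → Fin n → Fin n → Fin n → ℝ)
    (r : Matrix (Fin n) (Fin n) ℝ)
    (Sc : ℝ → ℝ)
    (hg : ∀ i j, Differentiable ℝ fun t => g t i j)
    (hg' : ∀ t i j, deriv (fun s => g s i j) t = φ t * g t i j)
    (hT : ∀ i j k l, Differentiable ℝ fun t => T t i j k l)
    (hT' : ∀ t i j k l, deriv (fun s => T s i j k l) t = φ t * T t i j k l)
    (hSc : Differentiable ℝ Sc)
    (hSc' : ∀ t, deriv Sc t = -φ t * Sc t) :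
    ∀ i j k l : Fin n,
      (Differentiable ℝ fun t =>
          T t i j k l - (1 / ((n : ℝ) - 2))
              * (g t j k * r i l - g t i k * r j l + g t i l * r j k - g t j l * r i k)
            + (Sc t / (((n : ℝ) - 1) * ((n : ℝ) - 2)))
              * (g t i l * g t j k - g t j l * g t i k)) ∧
        ∀ t, deriv (fun s =>
            T s i j k l - (1 / ((n : ℝ) - 2))
                * (g s j k * r i l - g s i k * r j l + g s i l * r j k - g s j l * r i k)
              + (Sc s / (((n : ℝ) - 1) * ((n : ℝ) - 2)))
                * (g s i l * g s j k - g s j l * g s i k)) t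
          = φ t * (T t i j k l - (1 / ((n : ℝ) - 2))
                * (g t j k * r i l - g t i k * r j l + g t i l * r j k - g t j l * r i k)
              + (Sc t / (((n : ℝ) - 1) * ((n : ℝ) - 2)))
                * (g t i l * g t j k - g t j l * g t i k)) :=
  yamabe_weyl_evolution_general n φ g T r Sc hg hg' hT hT' hSc hSc'
end

section
/- Let n ≥ 1, let φ : ℝ → ℝ be continuous, let g : ℝ → Matrix (Fin n) (Fin n) ℝ be a differentiable family with g'(t) = φ(t) • g(t) and g(t) ≠ 0 for every t, and let λ : ℝ → ℝ be differentiable. Suppose the family t ↦ λ(t) • g(t) is constant in t (i.e., its derivative vanishes identically). Then λ(t) = λ(0) * Real.exp (-∫ s in (0:ℝ)..t, φ s) for all t. -/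
/-- Forward direction of the Einstein-manifold theorem: if `g` solves the Yamabe
flow `∂g/∂t = φ • g` with `g t ≠ 0`, and the Einstein coefficient family
`t ↦ λ(t) • g(t)` (the Ricci tensor) is constant in `t`, then
`λ(t) = λ(0) e^{-∫₀ᵗ φ}`. -/
theorem einstein_yamabe_coefficient
    (n : ℕ) (hn : 1 ≤ n) (φ : ℝ → ℝ) (hφ : Continuous φ)
    (g : ℝ → Matrix (Fin n) (Fin n) ℝ)
    (hg : ∀ i j, Differentiable ℝ fun t => g t i j)
    (hflow : ∀ t i j, deriv (fun s => g s i j) t = φ t * g t i j)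
    (hne : ∀ t, g t ≠ 0)
    (lam : ℝ → ℝ) (hlam : Differentiable ℝ lam)
    (hconst : ∀ t (i j : Fin n), deriv (fun s => lam s * g s i j) t = 0) :
    ∀ t, lam t = lam 0 * Real.exp (-∫ s in (0:ℝ)..t, φ s) := by
  -- λ' t = -φ t * λ t
  have hode : ∀ t, deriv lam t = -(φ t * lam t) := by
    intro t
    obtain ⟨i, hi⟩ := Function.ne_iff.mp (hne t)
    obtain ⟨j, hj⟩ := Function.ne_iff.mp hi
    have h := hconst t i j
    rw [deriv_fun_mul (hlam t) ((hg i j) t), hflow t i j] at h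
    have : (deriv lam t + φ t * lam t) * g t i j = 0 := by ring_nf; ring_nf at h; linarith
    rcases mul_eq_zero.mp this with h' | h'
    · linarith
    · exact absurd h' hj
  set F : ℝ → ℝ := fun t => ∫ s in (0:ℝ)..t, φ s with hF
  have hFder : ∀ t, HasDerivAt F (φ t) t := fun t =>
    intervalIntegral.integral_hasDerivAt_right (hφ.intervalIntegrable _ _)
      (hφ.stronglyMeasurableAtFilter _ _) hφ.continuousAt
  set h : ℝ → ℝ := fun t => lam t * Real.exp (F t) with hh
  have hhd : ∀ t, HasDerivAt h 0 t := by
    intro t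
    have h1 : HasDerivAt (fun t => Real.exp (F t)) (φ t * Real.exp (F t)) t := by
      have := (Real.hasDerivAt_exp (F t)).comp t (hFder t)
      rw [mul_comm]; exact this
    have h2 := ((hlam t).hasDerivAt.mul h1)
    have : deriv lam t * Real.exp (F t) + lam t * (φ t * Real.exp (F t)) = 0 := by
      rw [hode t]; ring
    exact h2.congr_deriv this
  have hhc : ∀ t, h t = h 0 := by
    intro t
    exact is_const_of_deriv_eq_zero (fun x => (hhd x).differentiableAt)
      (fun x => (hhd x).deriv) t 0
  intro t
  have h0 : F 0 = 0 := by simp [hF]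
  have := hhc t
  simp only [hh, h0, Real.exp_zero, mul_one] at this
  have hexp : Real.exp (F t) ≠ 0 := Real.exp_ne_zero _
  field_simp [Real.exp_neg]
  have hF' : (∫ s in (0:ℝ)..t, φ s) = F t := rfl
  rw [hF', ← this, Real.exp_neg, mul_assoc, mul_inv_cancel₀ hexp, mul_one]
end

section
/- Let n ≥ 1, let φ : ℝ → ℝ be continuous, let g : ℝ → Matrix (Fin n) (Fin n) ℝ be a differentiable family with g'(t) = φ(t) • g(t), and let λ : ℝ → ℝ be differentiable. Define T(t) i j k l = λ(t) * (g(t) i k * g(t) j l - g(t) i l * g(t) j k), and suppose that (d/dt) T(t) i j k l = φ(t) * T(t) i j k l for all indices and all t, and that for every t there exist indices i, j, k, l with g(t) i k * g(t) j l - g(t) i l * g(t) j k ≠ 0. Then λ(t) = λ(0) * Real.exp (-∫ s in (0:ℝ)..t, φ s) for all t. -/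
/-- Component form of the constant-curvature theorem: if
`T_{ijkl}(t) = λ(t)(g_{ik}g_{jl} - g_{il}g_{jk})` satisfies the Yamabe
curvature evolution `∂T_{ijkl}/∂t = φ T_{ijkl}` under a flow
`∂g/∂t = φ • g`, and the sectional factor is somewhere nonzero at every
time, then `λ(t) = λ(0) e^{-∫₀ᵗ φ}`. -/
theorem constant_curvature_yamabe_coefficient
    (n : ℕ) (hn : 1 ≤ n) (φ : ℝ → ℝ) (hφ : Continuous φ)
    (g : ℝ → Matrix (Fin n) (Fin n) ℝ)
    (hg : ∀ i j, Differentiable ℝ fun t => g t i j)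
    (hflow : ∀ t i j, deriv (fun s => g s i j) t = φ t * g t i j)
    (lam : ℝ → ℝ) (hlam : Differentiable ℝ lam)
    (hT : ∀ t (i j k l : Fin n),
      deriv (fun s => lam s * (g s i k * g s j l - g s i l * g s j k)) t
        = φ t * (lam t * (g t i k * g t j l - g t i l * g t j k)))
    (hnd : ∀ t, ∃ i j k l : Fin n,
      g t i k * g t j l - g t i l * g t j k ≠ 0) :
    ∀ t, lam t = lam 0 * Real.exp (-∫ s in (0:ℝ)..t, φ s) := by
  -- Step 1: λ'(t) = -φ t * λ t
  have hode : ∀ t, deriv lam t = -φ t * lam t := by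
    intro t
    obtain ⟨i, j, k, l, hQ⟩ := hnd t
    have hgd : ∀ (a b : Fin n), HasDerivAt (fun s => g s a b) (φ t * g t a b) t := by
      intro a b
      have := (hg a b t).hasDerivAt
      rwa [hflow t a b] at this
    have hQd : HasDerivAt (fun s => g s i k * g s j l - g s i l * g s j k)
        (2 * φ t * (g t i k * g t j l - g t i l * g t j k)) t := by
      have h1 := ((hgd i k).mul (hgd j l)).sub ((hgd i l).mul (hgd j k))
      exact h1.congr_deriv (by ring)
    have hld := (hlam t).hasDerivAt
    have hprod := hld.mul hQd
    have := hprod.deriv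
    change deriv (fun s => lam s * (g s i k * g s j l - g s i l * g s j k)) t = _ at this
    rw [hT t i j k l] at this
    -- this : φ t * (lam t * Q) = λ' * Q + lam t * (2 φ t * Q)
    have key : deriv lam t * (g t i k * g t j l - g t i l * g t j k)
        = (-φ t * lam t) * (g t i k * g t j l - g t i l * g t j k) := by
      nlinarith [this]
    exact mul_right_cancel₀ hQ key
  -- Step 2: solve the ODE via h(t) = lam t * exp(∫₀ᵗ φ)
  intro t
  set F : ℝ → ℝ := fun u => ∫ s in (0:ℝ)..u, φ s with hF
  have hFd : ∀ u, HasDerivAt F (φ u) u := by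
    intro u
    exact intervalIntegral.integral_hasDerivAt_right
      (hφ.intervalIntegrable _ _) (hφ.stronglyMeasurableAtFilter _ _) hφ.continuousAt
  have hconst : ∀ u, lam u * Real.exp (F u) = lam 0 * Real.exp (F 0) := by
    have hderiv : ∀ u, HasDerivAt (fun v => lam v * Real.exp (F v)) 0 u := by
      intro u
      have h1 := ((hlam u).hasDerivAt.mul ((hFd u).exp))
      have : deriv lam u * Real.exp (F u) + lam u * (Real.exp (F u) * φ u) = 0 := by
        rw [hode u]; ring
      rwa [this] at h1
    intro u
    have := is_const_of_deriv_eq_zero (f := fun v => lam v * Real.exp (F v))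
      (fun v => (hderiv v).differentiableAt) (fun v => (hderiv v).deriv) u 0
    simpa using this
  have h0 : F 0 = 0 := by simp [hF]
  have ht := hconst t
  rw [h0, Real.exp_zero, mul_one] at ht
  have : lam t = lam 0 * Real.exp (-F t) := by
    have hne : Real.exp (F t) ≠ 0 := (Real.exp_pos _).ne'
    field_simp [Real.exp_neg] at ht ⊢
    rw [Real.exp_neg, ← ht, mul_assoc, mul_inv_cancel₀ hne, mul_one]
  simpa [hF] using this
end
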